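/- Let μ be the uniform distribution on [0,1]. Then for every k ≥ 1, the k-variance satisfies Var_k(μ) = ∑_{i=1}^k Var(X_(i)) = (1/((k+1)²(k+2)))·∑_{i=1}^k i(k+1−i) = k/(6(k+1)). In particular the sequence k ↦ Var_k(μ) is increasing and lim_{k→∞} Var_k(μ) = 1/6. -/

import Mathlib

open MeasureTheory ProbabilityTheory Real Filter

noncomputable section

namespace KVariance

/-- Matching cost between two `k`-tuples of points in `ℝ^d`: the minimum over permutations
`σ` of `(1/k) ∑ i, ‖x i - y (σ i)‖²`; this equals the squared 2-Wasserstein distance between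
the two empirical measures. -/
def matchCost {d k : ℕ} (x y : Fin k → EuclideanSpace ℝ (Fin d)) : ℝ :=
  (1 / (k : ℝ)) * ⨅ σ : Equiv.Perm (Fin k), ∑ i, ‖x i - y (σ i)‖ ^ 2

/-- The ambient scaling rate `ρ(k,d)`, with `ρ(1,d) = 1`. -/
def rho (k d : ℕ) : ℝ :=
  if k = 1 then 1
  else if d = 1 then (k : ℝ)
  else if d = 2 then (k : ℝ) / Real.log k
  else (k : ℝ) ^ ((2 : ℝ) / d)

/-- The `k`-variance of a measure `μ` on `ℝ^d`:
`(ρ(k,d)/2) · E[M(X,Y)]` where `X, Y` are independent `k`-tuples of i.i.d. samples from `μ`. -/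
def kVar (k d : ℕ) (μ : Measure (EuclideanSpace ℝ (Fin d))) : ℝ :=
  rho k d / 2 *
    ∫ p, matchCost p.1 p.2
      ∂((Measure.pi fun _ : Fin k => μ).prod (Measure.pi fun _ : Fin k => μ))

/-- Matching cost between two `k`-tuples of reals. -/
def matchCost1 {k : ℕ} (x y : Fin k → ℝ) : ℝ :=
  (1 / (k : ℝ)) * ⨅ σ : Equiv.Perm (Fin k), ∑ i, (x i - y (σ i)) ^ 2

/-- The `k`-variance of a measure on `ℝ` (where `ρ(k,1) = k`). -/
def kVar1 (k : ℕ) (μ : Measure ℝ) : ℝ :=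
  (k : ℝ) / 2 *
    ∫ p, matchCost1 p.1 p.2
      ∂((Measure.pi fun _ : Fin k => μ).prod (Measure.pi fun _ : Fin k => μ))

/-- The order statistics of a `k`-tuple of reals: `orderStat x i` is the `i`-th smallest
entry of `x` (with `i : Fin k`, zero-based). -/
def orderStat {k : ℕ} (x : Fin k → ℝ) : Fin k → ℝ := x ∘ Tuple.sort x

/-- The uniform distribution on `[0,1]`. -/
def unif : Measure ℝ := volume.restrict (Set.Icc (0 : ℝ) 1)

/-- Covariance of two real random variables. -/
def cov {Ω : Type*} [MeasurableSpace Ω] (X Y : Ω → ℝ) (μ : Measure Ω) : ℝ :=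
  ∫ ω, (X ω - ∫ a, X a ∂μ) * (Y ω - ∫ a, Y a ∂μ) ∂μ

end KVariance

open KVariance

section Aux
open Finset

instance : IsProbabilityMeasure unif := by
  constructor
  simp [unif, Real.volume_Icc]

lemma unif_Iic {t : ℝ} (h0 : 0 ≤ t) (h1 : t ≤ 1) : unif (Set.Iic t) = ENNReal.ofReal t := by
  rw [unif, Measure.restrict_apply measurableSet_Iic]
  have : Set.Iic t ∩ Set.Icc 0 1 = Set.Icc 0 t := by
    ext y; simp only [Set.mem_inter_iff, Set.mem_Iic, Set.mem_Icc]
    constructor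
    · rintro ⟨h, h2, _⟩; exact ⟨h2, h⟩
    · rintro ⟨h2, h⟩; exact ⟨h, h2, le_trans h h1⟩
  rw [this, Real.volume_Icc, sub_zero]

lemma unif_Ioi {t : ℝ} (h0 : 0 ≤ t) (h1 : t ≤ 1) : unif (Set.Ioi t) = ENNReal.ofReal (1 - t) := by
  rw [unif, Measure.restrict_apply measurableSet_Ioi]
  have : Set.Ioi t ∩ Set.Icc 0 1 = Set.Ioc t 1 := by
    ext y; simp only [Set.mem_inter_iff, Set.mem_Ioi, Set.mem_Icc, Set.mem_Ioc]
    constructor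
    · rintro ⟨h, _, h3⟩; exact ⟨h, h3⟩
    · rintro ⟨h, h3⟩; exact ⟨h, le_trans h0 h.le, h3⟩
  rw [this, Real.volume_Ioc]

lemma card_filter_comp_perm {k : ℕ} (x : Fin k → ℝ) (σ : Equiv.Perm (Fin k)) (p : ℝ → Prop)
    [DecidablePred p] :
    (univ.filter fun j => p (x (σ j))).card = (univ.filter fun j => p (x j)).card := by
  have : (univ.filter fun j => p (x (σ j))) = (univ.filter fun j => p (x j)).map
      σ.symm.toEmbedding := by
    ext j
    simp only [mem_filter, mem_univ, true_and, Finset.mem_map, Equiv.coe_toEmbedding]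
    constructor
    · intro h; exact ⟨σ j, h, σ.symm_apply_apply j⟩
    · rintro ⟨m, hm, rfl⟩; simpa using hm
  rw [this, Finset.card_map]

lemma orderStat_le_iff {k : ℕ} (x : Fin k → ℝ) (i : Fin k) (t : ℝ) :
    orderStat x i ≤ t ↔ (i : ℕ) < (univ.filter fun j => x j ≤ t).card := by
  have hs : Monotone (orderStat x) := Tuple.monotone_sort x
  have hcard : (univ.filter fun j => orderStat x j ≤ t).card
      = (univ.filter fun j => x j ≤ t).card :=
    card_filter_comp_perm x (Tuple.sort x) (fun y => y ≤ t)
  rw [← hcard]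
  constructor
  · intro h
    have hsub : Finset.Iic i ⊆ univ.filter fun j => orderStat x j ≤ t := by
      intro j hj
      simp only [Finset.mem_Iic] at hj
      simp only [mem_filter, mem_univ, true_and]
      exact le_trans (hs hj) h
    have := Finset.card_le_card hsub
    rw [Fin.card_Iic] at this
    omega
  · intro h
    by_contra hlt
    push_neg at hlt
    have hsub : (univ.filter fun j => orderStat x j ≤ t) ⊆ Finset.Iio i := by
      intro j hj
      simp only [mem_filter, mem_univ, true_and] at hj
      simp only [Finset.mem_Iio]
      by_contra hji
      push_neg at hji
      exact absurd (le_trans (hs hji) hj) (not_le.mpr hlt)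
    have := Finset.card_le_card hsub
    rw [Fin.card_Iio] at this
    omega

lemma lt_orderStat_iff {k : ℕ} (x : Fin k → ℝ) (i : Fin k) (t : ℝ) :
    t < orderStat x i ↔ (univ.filter fun j => x j ≤ t).card ≤ (i : ℕ) := by
  rw [← not_le, orderStat_le_iff, not_lt]

lemma measurable_card_filter {k : ℕ} (t : ℝ) :
    Measurable fun x : Fin k → ℝ => (univ.filter fun j => x j ≤ t).card := by
  simp only [Finset.card_filter]
  apply Finset.measurable_sum
  intro j _
  exact Measurable.ite (measurableSet_le (measurable_pi_apply j) measurable_const)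
    measurable_const measurable_const

lemma measurable_orderStat {k : ℕ} (i : Fin k) :
    Measurable fun x : Fin k → ℝ => orderStat x i := by
  apply measurable_of_Iic
  intro t
  have : (fun x : Fin k → ℝ => orderStat x i) ⁻¹' Set.Iic t
      = (fun x : Fin k → ℝ => (univ.filter fun j => x j ≤ t).card) ⁻¹' {n | (i:ℕ) < n} := by
    ext x
    simp [orderStat_le_iff]
  rw [this]
  exact measurable_card_filter t (Set.to_countable _).measurableSet

lemma ae_coords {k : ℕ} :
    ∀ᵐ x ∂(Measure.pi fun _ : Fin k => unif), ∀ j, x j ∈ Set.Icc (0:ℝ) 1 := by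
  rw [MeasureTheory.ae_all_iff]
  intro j
  rw [ae_iff]
  have he : {x : Fin k → ℝ | ¬ x j ∈ Set.Icc (0:ℝ) 1}
      = Function.eval j ⁻¹' (Set.Icc (0:ℝ) 1)ᶜ := rfl
  rw [he]
  apply Measure.pi_eval_preimage_null
  rw [unif, Measure.restrict_apply measurableSet_Icc.compl]
  simp

lemma null_coords {k : ℕ} :
    (Measure.pi fun _ : Fin k => unif) {x | ¬ ∀ j, x j ∈ Set.Icc (0:ℝ) 1} = 0 := by
  have := ae_coords (k := k)
  rwa [ae_iff] at this

lemma pi_card_eq {k : ℕ} {t : ℝ} (h0 : 0 ≤ t) (h1 : t ≤ 1) (m : ℕ) :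
    (Measure.pi fun _ : Fin k => unif) {x | (univ.filter fun j => x j ≤ t).card = m}
      = (k.choose m) * ENNReal.ofReal t ^ m * ENNReal.ofReal (1-t) ^ (k-m) := by
  set f : Finset (Fin k) → Set (Fin k → ℝ) :=
    fun S => Set.pi Set.univ fun j => if j ∈ S then Set.Iic t else Set.Ioi t with hf
  have hmemf : ∀ S (x : Fin k → ℝ), x ∈ f S ↔ ∀ j, (j ∈ S ↔ x j ≤ t) := by
    intro S x
    simp only [hf, Set.mem_pi, Set.mem_univ, forall_true_left]
    constructor
    · intro h j
      have := h j
      by_cases hj : j ∈ S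
      · simp [hj] at this; simp [hj, this]
      · simp [hj] at this; simp [hj]; exact this
    · intro h j
      by_cases hj : j ∈ S
      · simp [hj, (h j).mp hj]
      · simp [hj]; exact not_le.mp (fun hc => hj ((h j).mpr hc))
  have hfilter : ∀ S (x : Fin k → ℝ), x ∈ f S → (univ.filter fun j => x j ≤ t) = S := by
    intro S x hx
    ext j
    simp only [mem_filter, mem_univ, true_and]
    exact ((hmemf S x).mp hx j).symm
  have hev : {x : Fin k → ℝ | (univ.filter fun j => x j ≤ t).card = m}
      = ⋃ S ∈ Finset.powersetCard m (univ : Finset (Fin k)), f S := by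
    ext x
    simp only [Set.mem_setOf_eq, Set.mem_iUnion, Finset.mem_powersetCard, exists_prop]
    constructor
    · intro h
      refine ⟨univ.filter fun j => x j ≤ t, ⟨Finset.subset_univ _, h⟩, ?_⟩
      rw [hmemf]
      intro j
      simp only [mem_filter, mem_univ, true_and]
    · rintro ⟨S, ⟨-, hcard⟩, hx⟩
      rw [hfilter S x hx, hcard]
  rw [hev]
  have hmeas : ∀ S : Finset (Fin k), MeasurableSet (f S) := by
    intro S
    apply MeasurableSet.pi (Set.to_countable _)
    intro j _
    by_cases hj : j ∈ S <;> simp [hj, measurableSet_Iic, measurableSet_Ioi]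
  have hdisj : (Finset.powersetCard m (univ : Finset (Fin k)) : Set (Finset (Fin k))).PairwiseDisjoint f := by
    intro S hS S' hS' hne
    simp only [Function.onFun, Set.disjoint_left]
    intro x hx hx'
    exact hne (by rw [← hfilter S x hx, hfilter S' x hx'])
  rw [measure_biUnion_finset hdisj (fun S _ => hmeas S)]
  have hval : ∀ S ∈ Finset.powersetCard m (univ : Finset (Fin k)),
      (Measure.pi fun _ : Fin k => unif) (f S)
        = ENNReal.ofReal t ^ m * ENNReal.ofReal (1-t) ^ (k-m) := by
    intro S hS
    have hcard : S.card = m := (Finset.mem_powersetCard.mp hS).2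
    rw [hf, Measure.pi_pi]
    have : ∀ j : Fin k, unif (if j ∈ S then Set.Iic t else Set.Ioi t)
        = if j ∈ S then ENNReal.ofReal t else ENNReal.ofReal (1-t) := by
      intro j
      by_cases hj : j ∈ S <;> simp [hj, unif_Iic h0 h1, unif_Ioi h0 h1]
    simp_rw [this]
    rw [← Finset.prod_mul_prod_compl S]
    have e1 : ∏ j ∈ S, (if j ∈ S then ENNReal.ofReal t else ENNReal.ofReal (1-t))
        = ENNReal.ofReal t ^ m := by
      rw [Finset.prod_congr rfl (fun j hj => if_pos hj), Finset.prod_const, hcard]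
    have e2 : ∏ j ∈ Sᶜ, (if j ∈ S then ENNReal.ofReal t else ENNReal.ofReal (1-t))
        = ENNReal.ofReal (1-t) ^ (k-m) := by
      rw [Finset.prod_congr rfl (fun j hj => if_neg (Finset.mem_compl.mp hj)),
        Finset.prod_const, Finset.card_compl, hcard]
      simp
    rw [e1, e2]
  rw [Finset.sum_congr rfl hval, Finset.sum_const, Finset.card_powersetCard, Finset.card_univ,
    Fintype.card_fin, nsmul_eq_mul, mul_assoc]

lemma tail_eq {k : ℕ} (i : Fin k) {t : ℝ} (h0 : 0 ≤ t) (h1 : t ≤ 1) :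
    (Measure.pi fun _ : Fin k => unif) {x | t < orderStat x i}
      = ∑ m ∈ Finset.range ((i:ℕ)+1),
          (k.choose m) * ENNReal.ofReal t ^ m * ENNReal.ofReal (1-t) ^ (k-m) := by
  have hev : {x : Fin k → ℝ | t < orderStat x i}
      = ⋃ m ∈ Finset.range ((i:ℕ)+1),
          {x : Fin k → ℝ | (univ.filter fun j => x j ≤ t).card = m} := by
    ext x
    simp only [Set.mem_setOf_eq, Set.mem_iUnion, Finset.mem_range, exists_prop,
      lt_orderStat_iff, Nat.lt_succ_iff]
    constructor
    · intro h; exact ⟨_, h, rfl⟩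
    · rintro ⟨m, hm, hc⟩; omega
  rw [hev, measure_biUnion_finset ?disj ?meas]
  · exact Finset.sum_congr rfl fun m _ => pi_card_eq h0 h1 m
  case disj =>
    intro m hm m' hm' hne
    simp only [Function.onFun, Set.disjoint_left]
    intro x hx hx'
    exact hne (hx ▸ hx')
  case meas =>
    intro m _
    exact measurable_card_filter t (MeasurableSet.singleton m)

lemma tail_zero {k : ℕ} (i : Fin k) {t : ℝ} (h1 : 1 < t) :
    (Measure.pi fun _ : Fin k => unif) {x | t < orderStat x i} = 0 := by
  apply measure_mono_null _ (null_coords (k := k))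
  intro x hx
  simp only [Set.mem_setOf_eq] at hx ⊢
  intro hall
  have := (hall (Tuple.sort x i)).2
  have : orderStat x i ≤ 1 := this
  linarith

section Beta
open intervalIntegral
lemma betaNat : ∀ (b a : ℕ), ∫ x in (0:ℝ)..1, x ^ a * (1-x) ^ b
    = (a.factorial * b.factorial : ℝ) / (a+b+1).factorial := by
  intro b
  induction b with
  | zero =>
    intro a
    simp only [pow_zero, mul_one, integral_pow, Nat.factorial_zero, Nat.cast_one]
    rw [Nat.add_zero, Nat.factorial_succ]
    push_cast
    rw [one_pow, zero_pow (by omega), sub_zero]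
    field_simp
  | succ b ih =>
    intro a
    have hu : ∀ x ∈ Set.uIcc (0:ℝ) 1, HasDerivAt (fun x : ℝ => (1-x)^(b+1))
        (((b+1 : ℝ) * (1-x)^b) * (-1)) x := by
      intro x _
      have := (HasDerivAt.const_sub 1 (hasDerivAt_id x)).pow (b+1)
      refine this.congr_deriv ?_
      simp only [id]
      push_cast
      ring
    have hv : ∀ x ∈ Set.uIcc (0:ℝ) 1, HasDerivAt (fun x : ℝ => x^(a+1) / (a+1)) (x^a) x := by
      intro x _
      have := (hasDerivAt_pow (a+1) x).div_const (a+1)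
      refine this.congr_deriv ?_
      simp only [Nat.add_sub_cancel]; push_cast
      field_simp
    have hiu : IntervalIntegrable (fun x : ℝ => ((b+1 : ℝ) * (1-x)^b) * (-1)) volume 0 1 :=
      (Continuous.intervalIntegrable (by continuity) 0 1)
    have hiv : IntervalIntegrable (fun x : ℝ => x^a) volume 0 1 :=
      (Continuous.intervalIntegrable (by continuity) 0 1)
    have parts := integral_mul_deriv_eq_deriv_mul hu hv hiu hiv
    have e1 : ∫ x in (0:ℝ)..1, x ^ a * (1-x) ^ (b+1)
        = ∫ x in (0:ℝ)..1, (1-x) ^ (b+1) * x ^ a := by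
      congr 1; ext x; ring
    rw [e1, parts]
    have e2 : ∫ x in (0:ℝ)..1, ((b+1 : ℝ) * (1-x)^b) * (-1) * (x^(a+1) / (a+1))
        = (-((b:ℝ)+1) / (a+1)) * ∫ x in (0:ℝ)..1, x^(a+1) * (1-x)^b := by
      rw [← intervalIntegral.integral_const_mul]
      congr 1; ext x; ring
    rw [e2, ih (a+1)]
    have h1 : ((a:ℝ)+1) ≠ 0 := by positivity
    have hf : ∀ n : ℕ, ((n.factorial : ℝ)) ≠ 0 := fun n => by
      exact_mod_cast n.factorial_ne_zero
    have key : (a+1+b+1).factorial = (a+(b+1)+1).factorial := by ring_nf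
    rw [key] at *
    have hfs : ((a+(b+1)+1).factorial : ℝ) ≠ 0 := hf _
    have e3 : ((a+1).factorial : ℝ) = (a+1) * a.factorial := by
      rw [Nat.factorial_succ]; push_cast; ring
    have e4 : (((b+1).factorial : ℝ)) = (b+1) * b.factorial := by
      rw [Nat.factorial_succ]; push_cast; ring
    simp only [sub_self, ne_eq, zero_pow, Nat.succ_ne_zero, not_false_iff, sub_zero, one_pow,
      zero_pow, mul_zero, zero_mul]
    rw [e3, e4]
    field_simp
    ring

end Beta

lemma memLp_orderStat {k : ℕ} (i : Fin k) (p : ENNReal) :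
    MemLp (fun x => orderStat x i) p (Measure.pi fun _ : Fin k => unif) := by
  apply MemLp.of_bound (measurable_orderStat i).aestronglyMeasurable 1
  filter_upwards [ae_coords] with x hx
  have h := hx (Tuple.sort x i)
  have ho : orderStat x i = x (Tuple.sort x i) := rfl
  rw [ho, Real.norm_eq_abs, abs_le]
  exact ⟨by linarith [h.1], h.2⟩

lemma integrable_orderStat {k : ℕ} (i : Fin k) :
    Integrable (fun x => orderStat x i) (Measure.pi fun _ : Fin k => unif) :=
  (memLp_orderStat i 1).integrable le_rfl

lemma integral_orderStat {k : ℕ} (i : Fin k) :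
    ∫ x, orderStat x i ∂(Measure.pi fun _ : Fin k => unif) = ((i:ℕ)+1) / ((k:ℝ)+1) := by
  have hik : (i:ℕ) < k := i.2
  set g : ℝ → ℝ := fun t =>
    ∑ m ∈ Finset.range ((i:ℕ)+1), (k.choose m : ℝ) * (t^m * (1-t)^(k-m)) with hg
  have hnn : 0 ≤ᵐ[(Measure.pi fun _ : Fin k => unif)] fun x => orderStat x i := by
    filter_upwards [ae_coords] with x hx
    exact (hx (Tuple.sort x i)).1
  rw [(integrable_orderStat i).integral_eq_integral_meas_lt hnn]
  have heq : ∀ t ∈ Set.Ioi (0:ℝ),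
      ((Measure.pi fun _ : Fin k => unif) {a | t < orderStat a i}).toReal
        = Set.indicator (Set.Ioc 0 1) g t := by
    intro t ht
    simp only [Set.mem_Ioi] at ht
    by_cases h1 : t ≤ 1
    · rw [Set.indicator_of_mem (by exact ⟨ht, h1⟩), tail_eq i ht.le h1, hg]
      rw [ENNReal.toReal_sum]
      · refine Finset.sum_congr rfl fun m _ => ?_
        rw [ENNReal.toReal_mul, ENNReal.toReal_mul, ENNReal.toReal_pow, ENNReal.toReal_pow,
          ENNReal.toReal_ofReal ht.le, ENNReal.toReal_ofReal (by linarith)]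
        simp [mul_assoc]
      · intro m _
        exact ENNReal.mul_ne_top (ENNReal.mul_ne_top (ENNReal.natCast_ne_top _)
          (ENNReal.pow_ne_top ENNReal.ofReal_ne_top)) (ENNReal.pow_ne_top ENNReal.ofReal_ne_top)
    · push_neg at h1
      rw [tail_zero i h1, Set.indicator_of_notMem (by simp [Set.mem_Ioc]; intro _; linarith)]
      simp
  simp_rw [measureReal_def]
  rw [setIntegral_congr_fun measurableSet_Ioi heq, setIntegral_indicator measurableSet_Ioc]
  have hint : Set.Ioi (0:ℝ) ∩ Set.Ioc 0 1 = Set.Ioc 0 1 := by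
    rw [Set.inter_eq_right]
    intro y hy
    exact hy.1
  rw [hint, ← intervalIntegral.integral_of_le zero_le_one]
  have hterm : ∀ m ∈ Finset.range ((i:ℕ)+1),
      IntervalIntegrable (fun t : ℝ => (k.choose m : ℝ) * (t^m * (1-t)^(k-m))) volume 0 1 :=
    fun m _ => (Continuous.intervalIntegrable (by continuity) 0 1)
  show ∫ t in (0:ℝ)..1, ∑ m ∈ Finset.range ((i:ℕ)+1), (k.choose m : ℝ) * (t^m * (1-t)^(k-m))
      = ((i:ℕ)+1) / ((k:ℝ)+1)
  rw [intervalIntegral.integral_finset_sum hterm]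
  have hval : ∀ m ∈ Finset.range ((i:ℕ)+1),
      ∫ t in (0:ℝ)..1, (k.choose m : ℝ) * (t^m * (1-t)^(k-m)) = 1 / ((k:ℝ)+1) := by
    intro m hm
    simp only [Finset.mem_range] at hm
    have hmk : m ≤ k := by omega
    rw [intervalIntegral.integral_const_mul, betaNat (k-m) m]
    have hadd : m + (k-m) + 1 = k + 1 := by omega
    rw [hadd]
    have hch : (k.choose m : ℝ) * ((m.factorial : ℝ) * ((k-m).factorial : ℝ)) = k.factorial := by
      have h := congrArg (Nat.cast (R := ℝ)) (Nat.choose_mul_factorial_mul_factorial hmk)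
      push_cast at h
      linarith
    have hfs : ((k+1).factorial : ℝ) = ((k:ℝ)+1) * k.factorial := by
      rw [Nat.factorial_succ]; push_cast; ring
    rw [hfs]
    field_simp
    linear_combination hch
  rw [Finset.sum_congr rfl hval, Finset.sum_const, Finset.card_range, nsmul_eq_mul]
  push_cast
  ring

lemma map_eval_pi {k : ℕ} (j : Fin k) :
    (Measure.pi fun _ : Fin k => unif).map (fun x => x j) = unif := by
  ext s hs
  rw [Measure.map_apply (measurable_pi_apply j) hs]
  have : (fun x : Fin k → ℝ => x j) ⁻¹' s
      = Set.pi Set.univ (fun l => if l = j then s else Set.univ) := by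
    ext x
    simp only [Set.mem_preimage, Set.mem_pi, Set.mem_univ, forall_true_left]
    constructor
    · intro h l
      by_cases hl : l = j <;> simp [hl, h]
    · intro h
      have := h j
      simpa using this
  rw [this, Measure.pi_pi]
  have : ∀ l : Fin k, unif (if l = j then s else Set.univ) = if l = j then unif s else 1 := by
    intro l
    by_cases hl : l = j <;> simp [hl]
  simp_rw [this]
  rw [Finset.prod_ite_eq' univ j (fun _ => unif s)]
  simp

lemma integral_unif_sq : ∫ t, t^2 ∂unif = 1/3 := by
  show ∫ t in Set.Icc (0:ℝ) 1, t^2 = 1/3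
  rw [integral_Icc_eq_integral_Ioc, ← intervalIntegral.integral_of_le zero_le_one,
    integral_pow]
  norm_num

lemma integral_coord_sq {k : ℕ} (j : Fin k) :
    ∫ x, (x j)^2 ∂(Measure.pi fun _ : Fin k => unif) = 1/3 := by
  have h2 : ∫ t, t^2 ∂((Measure.pi fun _ : Fin k => unif).map (fun x => x j))
      = ∫ x, (x j)^2 ∂(Measure.pi fun _ : Fin k => unif) :=
    integral_map (measurable_pi_apply j).aemeasurable
      ((continuous_pow 2).aestronglyMeasurable)
  rw [map_eval_pi j] at h2
  rw [← h2, integral_unif_sq]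

lemma integrable_coord_sq {k : ℕ} (j : Fin k) :
    Integrable (fun x => (x j)^2) (Measure.pi fun _ : Fin k => unif) := by
  apply Integrable.mono' (integrable_const (1:ℝ)) (((measurable_pi_apply j).pow_const 2).aestronglyMeasurable)
  filter_upwards [ae_coords] with x hx
  have h := hx j
  rw [Real.norm_eq_abs, abs_le]
  constructor <;> nlinarith [h.1, h.2]

lemma sum_integral_sq {k : ℕ} :
    ∑ i : Fin k, ∫ x, (orderStat x i)^2 ∂(Measure.pi fun _ : Fin k => unif) = (k:ℝ)/3 := by
  rw [← integral_finset_sum]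
  · have hpt : ∀ x : Fin k → ℝ, ∑ i : Fin k, (orderStat x i)^2 = ∑ j : Fin k, (x j)^2 :=
      fun x => Equiv.sum_comp (Tuple.sort x) (fun j => (x j)^2)
    rw [integral_congr_ae (Eventually.of_forall hpt)]
    rw [integral_finset_sum _ (fun j _ => integrable_coord_sq j)]
    simp [integral_coord_sq, Finset.card_univ]
    ring
  · intro i _
    exact (memLp_orderStat i 2).integrable_sq

lemma sum_expand {k : ℕ} (a b : Fin k → ℝ) :
    ∑ i, (a i - b i)^2
      = (∑ i, (a i)^2) + (∑ i, (b i)^2) - 2 * ∑ i, a i * b i := by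
  rw [Finset.mul_sum, ← Finset.sum_add_distrib, ← Finset.sum_sub_distrib]
  apply Finset.sum_congr rfl
  intros; ring

lemma matchCost1_eq {k : ℕ} (x y : Fin k → ℝ) :
    matchCost1 x y = (1/(k:ℝ)) * ∑ i, (orderStat x i - orderStat y i)^2 := by
  unfold matchCost1
  congr 1
  apply le_antisymm
  · have hval : ∑ i, (x i - y (((Tuple.sort x).symm.trans (Tuple.sort y)) i))^2
        = ∑ i, (orderStat x i - orderStat y i)^2 := by
      rw [← Equiv.sum_comp (Tuple.sort x)
        (fun i => (x i - y (((Tuple.sort x).symm.trans (Tuple.sort y)) i))^2)]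
      apply Finset.sum_congr rfl
      intro i _
      simp [orderStat, Equiv.trans_apply, Equiv.symm_apply_apply]
    rw [← hval]
    exact ciInf_le (Set.Finite.bddBelow (Set.finite_range _)) _
  · apply le_ciInf
    intro σ
    have h1 : ∑ i, (orderStat x i)^2 = ∑ i, (x i)^2 :=
      Equiv.sum_comp (Tuple.sort x) (fun i => (x i)^2)
    have h2 : ∑ i, (orderStat y i)^2 = ∑ i, (y i)^2 :=
      Equiv.sum_comp (Tuple.sort y) (fun i => (y i)^2)
    have h3 : ∑ i, (y (σ i))^2 = ∑ i, (y i)^2 :=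
      Equiv.sum_comp σ (fun i => (y i)^2)
    have hcross : ∑ i, x i * y (σ i) ≤ ∑ i, orderStat x i * orderStat y i := by
      have hmono : Monovary (orderStat x) (orderStat y) :=
        (Tuple.monotone_sort x).monovary (Tuple.monotone_sort y)
      have hre := hmono.sum_mul_comp_perm_le_sum_mul
        (σ := ((Tuple.sort x).trans σ).trans (Tuple.sort y).symm)
      have hei : ∑ i, x i * y (σ i)
          = ∑ i, orderStat x i * orderStat y ((((Tuple.sort x).trans σ).trans (Tuple.sort y).symm) i) := by
        rw [← Equiv.sum_comp (Tuple.sort x) (fun i => x i * y (σ i))]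
        apply Finset.sum_congr rfl
        intro i _
        simp [orderStat, Equiv.trans_apply, Equiv.apply_symm_apply]
      rw [hei]
      exact hre
    rw [sum_expand, sum_expand, h1, h2, h3]
    linarith

lemma kVar1_eq_sum_var {k : ℕ} (hk : 1 ≤ k) :
    kVar1 k unif
      = ∑ i : Fin k, variance (fun x => orderStat x i)
          (Measure.pi fun _ : Fin k => unif) := by
  have hk0 : (k:ℝ) ≠ 0 := Nat.cast_ne_zero.mpr (by omega)
  set P := Measure.pi fun _ : Fin k => unif with hP
  have hvar : ∀ i : Fin k, variance (fun x => orderStat x i) P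
      = (∫ x, (orderStat x i)^2 ∂P) - (∫ x, orderStat x i ∂P)^2 := by
    intro i
    rw [variance_eq_sub (memLp_orderStat i 2)]
    rfl
  have hintsq : ∀ i : Fin k, Integrable (fun x => (orderStat x i)^2) P :=
    fun i => (memLp_orderStat i 2).integrable_sq
  have hI1 : ∀ i : Fin k, Integrable
      (fun p : (Fin k → ℝ) × (Fin k → ℝ) => (orderStat p.1 i)^2 * 1) (P.prod P) :=
    fun i => (hintsq i).mul_prod (integrable_const 1)
  have hI2 : ∀ i : Fin k, Integrable
      (fun p : (Fin k → ℝ) × (Fin k → ℝ) => orderStat p.1 i * orderStat p.2 i) (P.prod P) :=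
    fun i => (integrable_orderStat i).mul_prod (integrable_orderStat i)
  have hI3 : ∀ i : Fin k, Integrable
      (fun p : (Fin k → ℝ) × (Fin k → ℝ) => (1:ℝ) * (orderStat p.2 i)^2) (P.prod P) :=
    fun i => (integrable_const 1).mul_prod (hintsq i)
  have hfe : ∀ i : Fin k, (fun p : (Fin k → ℝ) × (Fin k → ℝ) =>
      (orderStat p.1 i - orderStat p.2 i)^2)
      = fun p => ((orderStat p.1 i)^2 * 1 + (1:ℝ) * (orderStat p.2 i)^2)
          - 2 * (orderStat p.1 i * orderStat p.2 i) := by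
    intro i; funext p; ring
  have hIi : ∀ i : Fin k, Integrable (fun p : (Fin k → ℝ) × (Fin k → ℝ) =>
      (orderStat p.1 i - orderStat p.2 i)^2) (P.prod P) := by
    intro i
    rw [hfe i]
    exact ((hI1 i).add (hI3 i)).sub ((hI2 i).const_mul 2)
  have hval : ∀ i : Fin k, ∫ p, (orderStat p.1 i - orderStat p.2 i)^2 ∂(P.prod P)
      = 2 * variance (fun x => orderStat x i) P := by
    intro i
    have hA' : Integrable (fun p : (Fin k → ℝ) × (Fin k → ℝ) =>
        (orderStat p.1 i)^2) (P.prod P) := by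
      simpa using (hintsq i).mul_prod (integrable_const (1:ℝ))
    have hB' : Integrable (fun p : (Fin k → ℝ) × (Fin k → ℝ) =>
        (orderStat p.2 i)^2) (P.prod P) := by
      simpa using (integrable_const (1:ℝ)).mul_prod (hintsq i)
    have hadd : Integrable (fun p : (Fin k → ℝ) × (Fin k → ℝ) =>
        (orderStat p.1 i)^2 + (orderStat p.2 i)^2) (P.prod P) := hA'.add hB'
    have hmul : Integrable (fun p : (Fin k → ℝ) × (Fin k → ℝ) =>
        2 * (orderStat p.1 i * orderStat p.2 i)) (P.prod P) := (hI2 i).const_mul 2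
    have hA : ∫ p, (orderStat p.1 i)^2 ∂(P.prod P) = ∫ x, (orderStat x i)^2 ∂P := by
      have := integral_prod_mul (μ := P) (ν := P)
        (fun x => (orderStat x i)^2) (fun _ => (1:ℝ))
      simpa using this
    have hB : ∫ p, (orderStat p.2 i)^2 ∂(P.prod P) = ∫ x, (orderStat x i)^2 ∂P := by
      have := integral_prod_mul (μ := P) (ν := P)
        (fun _ => (1:ℝ)) (fun x => (orderStat x i)^2)
      simpa using this
    have hC : ∫ p, orderStat p.1 i * orderStat p.2 i ∂(P.prod P)
        = (∫ x, orderStat x i ∂P) * (∫ x, orderStat x i ∂P) :=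
      integral_prod_mul (fun x => orderStat x i) (fun x => orderStat x i)
    have hfe2 : (fun p : (Fin k → ℝ) × (Fin k → ℝ) =>
        (orderStat p.1 i - orderStat p.2 i)^2)
        = fun p => ((orderStat p.1 i)^2 + (orderStat p.2 i)^2)
            - 2 * (orderStat p.1 i * orderStat p.2 i) := by
      funext p; ring
    rw [hfe2, integral_sub hadd hmul, integral_add hA' hB', integral_const_mul, hA, hB, hC,
      hvar i]
    ring
  have hmc : ∀ p : (Fin k → ℝ) × (Fin k → ℝ), matchCost1 p.1 p.2
      = (1/(k:ℝ)) * ∑ i, (orderStat p.1 i - orderStat p.2 i)^2 :=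
    fun p => matchCost1_eq p.1 p.2
  unfold kVar1
  rw [integral_congr_ae (Eventually.of_forall hmc)]
  rw [integral_const_mul]
  rw [integral_finset_sum _ (fun i _ => hIi i)]
  rw [Finset.sum_congr rfl (fun i _ => hval i)]
  rw [← Finset.mul_sum]
  field_simp


lemma variance_eq {k : ℕ} (i : Fin k) :
    variance (fun x => orderStat x i) (Measure.pi fun _ : Fin k => unif)
      = (∫ x, (orderStat x i)^2 ∂(Measure.pi fun _ : Fin k => unif))
        - (((i:ℕ):ℝ)+1)^2 / ((k:ℝ)+1)^2 := by
  rw [variance_eq_sub (memLp_orderStat i 2)]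
  have hrfl : (Measure.pi fun _ : Fin k => unif)[(fun x => orderStat x i) ^ 2]
      - ((Measure.pi fun _ : Fin k => unif)[fun x => orderStat x i]) ^ 2
      = (∫ x, (orderStat x i)^2 ∂(Measure.pi fun _ : Fin k => unif))
        - (∫ x, orderStat x i ∂(Measure.pi fun _ : Fin k => unif))^2 := rfl
  rw [hrfl, integral_orderStat i, div_pow]


lemma sumLinAux (n : ℕ) : ∑ i ∈ Finset.range n, ((i:ℝ)+1) = (n:ℝ)*((n:ℝ)+1)/2 := by
  induction n with
  | zero => simp
  | succ n ih => rw [Finset.sum_range_succ, ih]; push_cast; ring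

lemma sumSqAux (n : ℕ) : ∑ i ∈ Finset.range n, ((i:ℝ)+1)^2 = (n:ℝ)*((n:ℝ)+1)*(2*(n:ℝ)+1)/6 := by
  induction n with
  | zero => simp
  | succ n ih => rw [Finset.sum_range_succ, ih]; push_cast; ring

lemma sum_var_eq {k : ℕ} :
    ∑ i : Fin k, variance (fun x => orderStat x i) (Measure.pi fun _ : Fin k => unif)
      = (k:ℝ) / (6 * ((k:ℝ)+1)) := by
  have h1 : ∑ i : Fin k, variance (fun x => orderStat x i) (Measure.pi fun _ : Fin k => unif)
      = (∑ i : Fin k, ∫ x, (orderStat x i)^2 ∂(Measure.pi fun _ : Fin k => unif))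
        - ∑ i : Fin k, (((i:ℕ):ℝ)+1)^2 / ((k:ℝ)+1)^2 := by
    rw [← Finset.sum_sub_distrib]
    exact Finset.sum_congr rfl fun i _ => variance_eq i
  rw [h1, sum_integral_sq]
  have h2 : ∑ i : Fin k, (((i:ℕ):ℝ)+1)^2 / ((k:ℝ)+1)^2
      = (∑ i ∈ Finset.range k, ((i:ℝ)+1)^2) / ((k:ℝ)+1)^2 := by
    rw [Finset.sum_div]
    exact Fin.sum_univ_eq_sum_range (fun i => ((i:ℝ)+1)^2 / ((k:ℝ)+1)^2) k
  rw [h2, sumSqAux]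
  have hk1 : ((k:ℝ)+1) ≠ 0 := by positivity
  field_simp
  ring


end Aux


/-- for the uniform distribution on `[0,1]`,
`Var_k = ∑ᵢ Var(X₍ᵢ₎) = (1/((k+1)²(k+2))) ∑ᵢ i(k+1-i) = k/(6(k+1))`; the sequence is
increasing in `k` and tends to `1/6`. -/
theorem statement7 :
    (∀ k : ℕ, 1 ≤ k →
      kVar1 k unif
          = ∑ i : Fin k, variance (fun x => orderStat x i)
              (MeasureTheory.Measure.pi fun _ : Fin k => unif) ∧
        kVar1 k unif
          = (1 / (((k : ℝ) + 1) ^ 2 * ((k : ℝ) + 2)))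
              * ∑ i : Fin k, (((i : ℕ) : ℝ) + 1) * (((k : ℝ) + 1) - (((i : ℕ) : ℝ) + 1)) ∧
        kVar1 k unif = (k : ℝ) / (6 * ((k : ℝ) + 1))) ∧
      (∀ k l : ℕ, 1 ≤ k → k ≤ l → kVar1 k unif ≤ kVar1 l unif) ∧
      Tendsto (fun k : ℕ => kVar1 k unif) atTop (nhds (1 / 6)) := by
  have hmain : ∀ k : ℕ, 1 ≤ k → kVar1 k unif = (k : ℝ) / (6 * ((k : ℝ) + 1)) := by
    intro k hk
    rw [kVar1_eq_sum_var hk, sum_var_eq]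
  refine ⟨fun k hk => ⟨kVar1_eq_sum_var hk, ?_, hmain k hk⟩, ?_, ?_⟩
  · rw [hmain k hk]
    have hs : ∑ i : Fin k, (((i : ℕ) : ℝ) + 1) * (((k : ℝ) + 1) - (((i : ℕ) : ℝ) + 1))
        = ((k:ℝ)+1) * ((k:ℝ)*((k:ℝ)+1)/2) - (k:ℝ)*((k:ℝ)+1)*(2*(k:ℝ)+1)/6 := by
      rw [Fin.sum_univ_eq_sum_range fun i => (((i:ℕ):ℝ)+1) * (((k:ℝ)+1) - (((i:ℕ):ℝ)+1))]
      have : ∀ i ∈ Finset.range k, ((i:ℝ)+1) * (((k:ℝ)+1) - ((i:ℝ)+1))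
          = ((k:ℝ)+1) * ((i:ℝ)+1) - ((i:ℝ)+1)^2 := by intros; ring
      rw [Finset.sum_congr rfl this, Finset.sum_sub_distrib, ← Finset.mul_sum, sumLinAux, sumSqAux]
    rw [hs]
    have hk1 : ((k:ℝ)+1) ≠ 0 := by positivity
    have hk2 : ((k:ℝ)+2) ≠ 0 := by positivity
    field_simp
    ring
  · intro k l hk hkl
    rw [hmain k hk, hmain l (le_trans hk hkl)]
    have hc : (k:ℝ) ≤ l := Nat.cast_le.mpr hkl
    rw [div_le_div_iff₀ (by positivity) (by positivity)]
    nlinarith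
  · have he : ∀ᶠ k : ℕ in atTop, (1:ℝ)/6 - (1/6) * (1/((k:ℝ)+1)) = kVar1 k unif := by
      filter_upwards [eventually_ge_atTop 1] with k hk
      rw [hmain k hk]
      have hk1 : ((k:ℝ)+1) ≠ 0 := by positivity
      field_simp
      ring
    apply Tendsto.congr' he
    have h0 := tendsto_one_div_add_atTop_nhds_zero_nat (𝕜 := ℝ)
    have := (tendsto_const_nhds (x := (1:ℝ)/6) (f := atTop (α := ℕ))).sub
      (h0.const_mul (1/6))
    simpa using this
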